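/- Let ρ_XB = Σ_x P_X(x) |x⟩⟨x| ⊗ ρ_B^x be a classical-quantum density operator on H_X ⊗ H_B. Then q_corr(X|B)_ρ = max over quantum operations E: L(H_B) → L(H_{X'}) of Σ_x P_X(x) ⟨x| E(ρ_B^x) |x⟩, and this quantity equals p_guess(X|B)_ρ := max over POVMs {E_B^x}_x on H_B of Σ_x P_X(x) tr(E_B^x ρ_B^x). -/

import Mathlib

open Matrix
open scoped Kronecker ComplexConjugate ComplexOrder

noncomputable section

/-- Partial trace over the first (A) subsystem. -/
def ptraceA {A B : Type*} [Fintype A] (M : Matrix (A × B) (A × B) ℂ) :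
    Matrix B B ℂ :=
  Matrix.of fun i j => ∑ a : A, M (a, i) (a, j)

/-- Partial trace over the second (B) subsystem. -/
def ptraceB {A B : Type*} [Fintype B] (M : Matrix (A × B) (A × B) ℂ) :
    Matrix A A ℂ :=
  Matrix.of fun i j => ∑ b : B, M (i, b) (j, b)

/-- A density operator: positive semidefinite with unit trace. -/
def IsDensity {n : Type*} [Fintype n] (ρ : Matrix n n ℂ) : Prop :=
  ρ.PosSemidef ∧ ρ.trace = 1

/-- Conditional min-entropy `H_min(A|B)_ρ = - inf_σ D_∞(ρ ‖ id_A ⊗ σ)`, where the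
infimum ranges over density operators `σ` on `B` and
`D_∞(τ‖τ') = inf {λ | τ ≤ 2^λ τ'}`. -/
def Hmin {A B : Type*} [Fintype A] [Fintype B] [DecidableEq A] [DecidableEq B]
    (ρ : Matrix (A × B) (A × B) ℂ) : ℝ :=
  - sInf {l : ℝ | ∃ σ : Matrix B B ℂ, IsDensity σ ∧
      (((2 : ℝ) ^ l : ℝ) • ((1 : Matrix A A ℂ) ⊗ₖ σ) - ρ).PosSemidef}

open scoped Classical in
/-- Positive semidefinite square root (junk value `0` off the PSD cone). -/
def psqrt {n : Type*} [Fintype n] [DecidableEq n] (M : Matrix n n ℂ) : Matrix n n ℂ :=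
  if h : M.PosSemidef then
    (h.1.eigenvectorUnitary : Matrix n n ℂ) * diagonal ((↑) ∘ (√·) ∘ h.1.eigenvalues) *
      (star h.1.eigenvectorUnitary : Matrix n n ℂ) else 0

/-- Trace norm `‖M‖₁ = tr √(Mᴴ M)`. -/
def traceNorm {n : Type*} [Fintype n] [DecidableEq n] (M : Matrix n n ℂ) : ℝ :=
  (psqrt (Mᴴ * M)).trace.re

/-- Fidelity `F(ρ,σ) = ‖√ρ √σ‖₁`. -/
def fidelity {n : Type*} [Fintype n] [DecidableEq n] (ρ σ : Matrix n n ℂ) : ℝ :=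
  traceNorm (psqrt ρ * psqrt σ)

/-- Choi matrix of a linear map on matrices. -/
def choi {B A' : Type*} [Fintype B] [DecidableEq B] [Fintype A']
    (F : Matrix B B ℂ →ₗ[ℂ] Matrix A' A' ℂ) : Matrix (B × A') (B × A') ℂ :=
  Matrix.of fun p q => (F (Matrix.single p.1 q.1 1)) p.2 q.2

/-- A quantum operation (CPTP map): completely positive (PSD Choi matrix, by Choi's
theorem) and trace-preserving. -/
def IsCPTP {B A' : Type*} [Fintype B] [DecidableEq B] [Fintype A']
    (F : Matrix B B ℂ →ₗ[ℂ] Matrix A' A' ℂ) : Prop :=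
  (choi F).PosSemidef ∧ ∀ M : Matrix B B ℂ, (F M).trace = M.trace

/-- The map `id_A ⊗ F` applied to a bipartite operator. -/
def idTensor {A B A' : Type*} [Fintype B]
    (F : Matrix B B ℂ →ₗ[ℂ] Matrix A' A' ℂ) (ρ : Matrix (A × B) (A × B) ℂ) :
    Matrix (A × A') (A × A') ℂ :=
  Matrix.of fun p q => (F (Matrix.of fun b b' => ρ (p.1, b) (q.1, b'))) p.2 q.2

/-- The quadratic form `⟨ψ|M|ψ⟩` (real part). -/
def pureOverlap {n : Type*} [Fintype n] (ψ : n → ℂ) (M : Matrix n n ℂ) : ℝ :=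
  (∑ p, ∑ q, conj (ψ p) * M p q * ψ q).re

/-- The maximally entangled state `|Φ⟩ = d^{-1/2} ∑ₓ |x⟩|x⟩`. -/
def maxEnt (A : Type*) [Fintype A] [DecidableEq A] : A × A → ℂ :=
  fun p => if p.1 = p.2 then ((Real.sqrt (Fintype.card A))⁻¹ : ℝ) else 0

/-- `q_corr(A|B)_ρ`: `d_A` times the maximal squared fidelity with the maximally
entangled state achievable by quantum operations on `B`. -/
def qcorr {A B : Type*} [Fintype A] [Fintype B] [DecidableEq A] [DecidableEq B]
    (ρ : Matrix (A × B) (A × B) ℂ) : ℝ :=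
  (Fintype.card A : ℝ) *
    sSup {x : ℝ | ∃ F : Matrix B B ℂ →ₗ[ℂ] Matrix A A ℂ, IsCPTP F ∧
      x = pureOverlap (maxEnt A) (idTensor F ρ)}

/-- The completely mixed state. -/
def mixed (A : Type*) [Fintype A] [DecidableEq A] : Matrix A A ℂ :=
  ((Fintype.card A : ℂ)⁻¹) • (1 : Matrix A A ℂ)

/-- `q_decpl(A|B)_ρ`: `d_A` times the maximal squared fidelity with `τ_A ⊗ σ_B`. -/
def qdecpl {A B : Type*} [Fintype A] [Fintype B] [DecidableEq A] [DecidableEq B]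
    (ρ : Matrix (A × B) (A × B) ℂ) : ℝ :=
  (Fintype.card A : ℝ) *
    sSup {x : ℝ | ∃ σ : Matrix B B ℂ, IsDensity σ ∧
      x = (fidelity ρ ((mixed A) ⊗ₖ σ)) ^ 2}

/-- Reduced state `tr_C |ψ⟩⟨ψ|` of a pure state `ψ` on `(A ⊗ B) ⊗ C`. -/
def redL {S C : Type*} [Fintype C] (ψ : S × C → ℂ) : Matrix S S ℂ :=
  Matrix.of fun s s' => ∑ c, ψ (s, c) * conj (ψ (s', c))

/-- Reduced state `tr_B |ψ⟩⟨ψ|` on `A ⊗ C` of a pure state `ψ` on `(A ⊗ B) ⊗ C`. -/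
def redAC {A B C : Type*} [Fintype B] (ψ : (A × B) × C → ℂ) :
    Matrix (A × C) (A × C) ℂ :=
  Matrix.of fun p q => ∑ b, ψ ((p.1, b), p.2) * conj (ψ ((q.1, b), q.2))


/-!
For a classical-quantum state, `id ⊗ F` produces a block-diagonal operator with blocks
`P(x) F(ρ_B^x)`, so `d_X` times its overlap with the maximally entangled state is
`∑ₓ P(x) ⟨x|F(ρ_B^x)|x⟩`. These diagonal values of channels are exactly POVM outcome
probabilities: the effects `Eₓ = F†(|x⟩⟨x|)` are positive because they are blocks of the
Choi matrix and sum to `1` because `F` preserves the trace, while conversely a POVM gives the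
channel `ρ ↦ ∑ₓ tr(Eₓ ρ) |x⟩⟨x|`.
-/

lemma LinearMap.matrix_apply_eq_sum_single {B X : Type*} [Fintype B] [DecidableEq B]
    (F : Matrix B B ℂ →ₗ[ℂ] Matrix X X ℂ) (M : Matrix B B ℂ) (x y : X) :
    F M x y = ∑ b, ∑ c, M b c * F (Matrix.single b c 1) x y := by
  have hsingle : ∀ b c, Matrix.single b c (M b c) = M b c • Matrix.single b c 1 := fun b c => by
    rw [Matrix.smul_single, smul_eq_mul, mul_one]
  conv_lhs => rw [matrix_eq_sum_single M]
  simp_rw [hsingle, map_sum, _root_.map_smul, Matrix.sum_apply, Matrix.smul_apply, smul_eq_mul]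

section Measurement

variable {X B : Type*} [Fintype B] [DecidableEq B]

def measurementChannel [DecidableEq X] (E : X → Matrix B B ℂ) :
    Matrix B B ℂ →ₗ[ℂ] Matrix X X ℂ where
  toFun M := Matrix.diagonal fun x => (E x * M).trace
  map_add' M N := by simp [Matrix.mul_add]
  map_smul' c M := by ext i j; simp [Matrix.diagonal_apply]

lemma choi_measurementChannel [Fintype X] [DecidableEq X] (E : X → Matrix B B ℂ) :
    choi (measurementChannel E) = ∑ x, (E x)ᵀ ⊗ₖ Matrix.single x x 1 := by
  ext ⟨b, x⟩ ⟨c, y⟩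
  simp only [choi, measurementChannel, LinearMap.coe_mk, AddHom.coe_mk, Matrix.trace_mul_single,
    MulOpposite.op_one, one_smul, Matrix.of_apply, Matrix.sum_apply, Matrix.kroneckerMap_apply]
  by_cases h : x = y <;> simp [Matrix.diagonal, Matrix.single, ite_and, h]

lemma isCPTP_measurementChannel [Fintype X] [DecidableEq X] {E : X → Matrix B B ℂ}
    (hE : ∀ x, (E x).PosSemidef) (hE1 : ∑ x, E x = 1) : IsCPTP (measurementChannel E) := by
  refine ⟨?_, fun M => ?_⟩
  · rw [choi_measurementChannel]
    exact Matrix.posSemidef_sum _ fun x _ => (hE x).transpose.kronecker <|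
      Matrix.diagonal_single x (1 : ℂ) ▸ .diagonal (Pi.single_nonneg.2 zero_le_one)
  · simp [measurementChannel, Matrix.trace_diagonal, ← Matrix.trace_sum, ← Finset.sum_mul, hE1]

/-- `F†(|x⟩⟨x|)`: the effects of measuring the output of `F` in the computational basis. -/
def diagEffect (F : Matrix B B ℂ →ₗ[ℂ] Matrix X X ℂ) (x : X) : Matrix B B ℂ :=
  Matrix.of fun b c => F (Matrix.single c b 1) x x

lemma trace_diagEffect_mul (F : Matrix B B ℂ →ₗ[ℂ] Matrix X X ℂ) (x : X) (M : Matrix B B ℂ) :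
    (diagEffect F x * M).trace = F M x x := by
  rw [F.matrix_apply_eq_sum_single, Finset.sum_comm]
  simp [diagEffect, Matrix.trace, Matrix.mul_apply, mul_comm]

lemma IsCPTP.diagEffect_posSemidef [Fintype X] {F : Matrix B B ℂ →ₗ[ℂ] Matrix X X ℂ}
    (hF : IsCPTP F) (x : X) : (diagEffect F x).PosSemidef :=
  (hF.1.submatrix fun b => (b, x)).transpose

lemma IsCPTP.sum_diagEffect [Fintype X] {F : Matrix B B ℂ →ₗ[ℂ] Matrix X X ℂ}
    (hF : IsCPTP F) : ∑ x, diagEffect F x = 1 := by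
  ext b c
  simp only [Matrix.sum_apply, diagEffect, Matrix.of_apply]
  change (F (Matrix.single c b 1)).trace = _
  rw [hF.2]
  rcases eq_or_ne b c with rfl | h
  · simp
  · simp [h, h.symm]

end Measurement

lemma setOf_exists_isCPTP_eq_setOf_exists_povm {X B : Type*} [Fintype X] [Fintype B]
    [DecidableEq X] [DecidableEq B] (P : X → ℝ) (ρB : X → Matrix B B ℂ) :
    {v : ℝ | ∃ F : Matrix B B ℂ →ₗ[ℂ] Matrix X X ℂ, IsCPTP F ∧
        v = ∑ x, P x * (F (ρB x) x x).re} =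
      {v : ℝ | ∃ E : X → Matrix B B ℂ, (∀ x, (E x).PosSemidef) ∧ ∑ x, E x = 1 ∧
        v = ∑ x, P x * (E x * ρB x).trace.re} := by
  ext v
  constructor
  · rintro ⟨F, hF, rfl⟩
    exact ⟨diagEffect F, hF.diagEffect_posSemidef, hF.sum_diagEffect, by
      simp only [trace_diagEffect_mul]⟩
  · rintro ⟨E, hE, hE1, rfl⟩
    exact ⟨measurementChannel E, isCPTP_measurementChannel hE hE1, by
      simp [measurementChannel]⟩

lemma card_mul_pureOverlap_maxEnt {A : Type*} [Fintype A] [DecidableEq A]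
    (M : Matrix (A × A) (A × A) ℂ) :
    Fintype.card A * pureOverlap (maxEnt A) M = (∑ x, ∑ y, M (x, x) (y, y)).re := by
  rcases isEmpty_or_nonempty A with hA | hA
  · simp [pureOverlap]
  have hcard : (Fintype.card A : ℝ) * ((√(Fintype.card A))⁻¹ * (√(Fintype.card A))⁻¹) = 1 := by
    rw [← mul_inv, Real.mul_self_sqrt (Nat.cast_nonneg _), mul_inv_cancel₀ (by positivity)]
  have hsum : (∑ p : A × A, ∑ q : A × A, conj (maxEnt A p) * M p q * maxEnt A q) =
      (((√(Fintype.card A))⁻¹ * (√(Fintype.card A))⁻¹ : ℝ) : ℂ) * ∑ x, ∑ y, M (x, x) (y, y) := by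
    simp only [maxEnt, Fintype.sum_prod_type, apply_ite (starRingEnd ℂ), map_zero,
      Complex.conj_ofReal, ite_mul, mul_ite, zero_mul, mul_zero, Finset.sum_ite_irrel,
      Finset.sum_const_zero, Finset.sum_ite_eq, Finset.mem_univ, if_true, Finset.mul_sum]
    push_cast
    exact Finset.sum_congr rfl fun x _ => Finset.sum_congr rfl fun y _ => by ring
  rw [pureOverlap, hsum, Complex.re_ofReal_mul, ← mul_assoc, hcard, one_mul]

open scoped Pointwise in
lemma qcorr_eq_sSup {A B : Type*} [Fintype A] [Fintype B] [DecidableEq A] [DecidableEq B]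
    (ρ : Matrix (A × B) (A × B) ℂ) :
    qcorr ρ = sSup {v : ℝ | ∃ F : Matrix B B ℂ →ₗ[ℂ] Matrix A A ℂ, IsCPTP F ∧
      v = (∑ x, ∑ y, idTensor F ρ (x, x) (y, y)).re} := by
  have hset : {v : ℝ | ∃ F : Matrix B B ℂ →ₗ[ℂ] Matrix A A ℂ, IsCPTP F ∧
        v = (∑ x, ∑ y, idTensor F ρ (x, x) (y, y)).re} =
      (Fintype.card A : ℝ) • {v : ℝ | ∃ F : Matrix B B ℂ →ₗ[ℂ] Matrix A A ℂ, IsCPTP F ∧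
        v = pureOverlap (maxEnt A) (idTensor F ρ)} := by
    ext v
    simp only [Set.mem_smul_set, Set.mem_ofPred_eq, smul_eq_mul]
    constructor
    · rintro ⟨F, hF, rfl⟩
      exact ⟨_, ⟨F, hF, rfl⟩, card_mul_pureOverlap_maxEnt _⟩
    · rintro ⟨_, ⟨F, hF, rfl⟩, rfl⟩
      exact ⟨F, hF, card_mul_pureOverlap_maxEnt _⟩
  rw [hset, Real.sSup_smul_of_nonneg (Nat.cast_nonneg _), smul_eq_mul, qcorr]

lemma idTensor_cq_apply {X B A' : Type*} [Fintype X] [Fintype B] [DecidableEq X]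
    (p : X → ℂ) (ρB : X → Matrix B B ℂ) (F : Matrix B B ℂ →ₗ[ℂ] Matrix A' A' ℂ)
    (x y : X) (a a' : A') :
    idTensor F (∑ z, p z • (Matrix.single z z (1 : ℂ) ⊗ₖ ρB z)) (x, a) (y, a') =
      if x = y then p x * F (ρB x) a a' else 0 := by
  have hblock : (Matrix.of fun b b' =>
      (∑ z, p z • (Matrix.single z z (1 : ℂ) ⊗ₖ ρB z)) (x, b) (y, b')) =
        if x = y then p x • ρB x else 0 := by
    ext b b'
    by_cases h : x = y <;>
      simp [Matrix.sum_apply, Matrix.single, ite_and, h]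
  simp only [idTensor, Matrix.of_apply, hblock]
  split_ifs <;> simp

lemma qcorr_cq {X B : Type*} [Fintype X] [Fintype B] [DecidableEq X] [DecidableEq B]
    (P : X → ℝ) (ρB : X → Matrix B B ℂ) :
    qcorr (∑ x : X, (P x : ℂ) • (Matrix.single x x (1 : ℂ) ⊗ₖ ρB x)) =
      sSup {v : ℝ | ∃ F : Matrix B B ℂ →ₗ[ℂ] Matrix X X ℂ, IsCPTP F ∧
        v = ∑ x, P x * (F (ρB x) x x).re} := by
  simp only [qcorr_eq_sSup, idTensor_cq_apply (fun x => (P x : ℂ)), Finset.sum_ite_eq,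
    Finset.mem_univ, if_true, Complex.re_sum, Complex.re_ofReal_mul]

theorem stmt11_general {X B : Type*} [Fintype X] [Fintype B] [DecidableEq X] [DecidableEq B]
    (P : X → ℝ)
    (ρB : X → Matrix B B ℂ) :
    qcorr (∑ x : X, (P x : ℂ) • (Matrix.single x x (1 : ℂ) ⊗ₖ ρB x)) =
        sSup {v : ℝ | ∃ F : Matrix B B ℂ →ₗ[ℂ] Matrix X X ℂ, IsCPTP F ∧
          v = ∑ x, P x * ((F (ρB x)) x x).re} ∧
      qcorr (∑ x : X, (P x : ℂ) • (Matrix.single x x (1 : ℂ) ⊗ₖ ρB x)) =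
        sSup {v : ℝ | ∃ E : X → Matrix B B ℂ,
          (∀ x, (E x).PosSemidef) ∧ (∑ x, E x) = 1 ∧
          v = ∑ x, P x * ((E x * ρB x).trace.re)} := by
  rw [← setOf_exists_isCPTP_eq_setOf_exists_povm]
  exact ⟨qcorr_cq P ρB, qcorr_cq P ρB⟩

/-- for a classical-quantum state `ρ_XB = ∑ₓ P_X(x)|x⟩⟨x| ⊗ ρ_B^x`,
`q_corr(X|B)_ρ = max_E ∑ₓ P_X(x) ⟨x|E(ρ_B^x)|x⟩`, and this equals
`p_guess(X|B)_ρ`, the maximal POVM guessing probability. -/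
theorem stmt11 {X B : Type*} [Fintype X] [Fintype B] [DecidableEq X] [DecidableEq B]
    (P : X → ℝ) (hP : ∀ x, 0 ≤ P x) (hP1 : ∑ x, P x = 1)
    (ρB : X → Matrix B B ℂ) (hρB : ∀ x, IsDensity (ρB x)) :
    qcorr (∑ x : X, (P x : ℂ) • (Matrix.single x x (1 : ℂ) ⊗ₖ ρB x)) =
        sSup {v : ℝ | ∃ F : Matrix B B ℂ →ₗ[ℂ] Matrix X X ℂ, IsCPTP F ∧
          v = ∑ x, P x * ((F (ρB x)) x x).re} ∧
      qcorr (∑ x : X, (P x : ℂ) • (Matrix.single x x (1 : ℂ) ⊗ₖ ρB x)) =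
        sSup {v : ℝ | ∃ E : X → Matrix B B ℂ,
          (∀ x, (E x).PosSemidef) ∧ (∑ x, E x) = 1 ∧
          v = ∑ x, P x * ((E x * ρB x).trace.re)} :=
  stmt11_general P ρB
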